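/- arXiv:1309.0772 — 5 statements merged into one kernel-verified Lean document; each statement's English description precedes it below -/
import Mathlib

section
/- For 0 < q < 1 and nonnegative integers n, k, l, r with l = n + k - 2r and 0 ≤ r ≤ min(n,k), the ratio [k+1]_q[n+1]_q / ([l+1]_q [r+1]_q^2) satisfies (1-q^2)^3 ≤ [k+1]_q[n+1]_q/([l+1]_q[r+1]_q^2) ≤ (1-q^2)^{-2}. -/
/-! With `t = q²` one has `[m+1]_q = q⁻ᵐ (1 - t^(m+1)) / (1 - t)`. Since `l + 2r = n + k`, the
powers of `q` cancel in the ratio, leaving `(1 - t)` times a quotient of four factors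
`1 - t^(m+1)`, each of which lies in `[1 - t, 1]`; the two bounds follow by estimating every
factor on the appropriate side. -/

/-- The `q`-number `[a]_q = q^{-a+1}(1-q^{2a})/(1-q^2)`. -/
noncomputable def qNum (q : ℝ) (a : ℕ) : ℝ :=
  q ^ (1 - (a : ℤ)) * (1 - q ^ (2 * a)) / (1 - q ^ 2)

lemma qNum_succ (q : ℝ) (a : ℕ) :
    qNum q (a + 1) = (1 - (q ^ 2) ^ (a + 1)) / (q ^ a * (1 - q ^ 2)) := by
  have hexp : (1 - ((a + 1 : ℕ) : ℤ)) = -(a : ℤ) := by push_cast; ring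
  rw [qNum, hexp, zpow_neg, zpow_natCast, ← pow_mul, mul_comm 2, inv_mul_eq_div, div_div]

lemma qNum_ratio_eq {q : ℝ} (hq : q ≠ 0) {n k r l : ℕ} (hl : l + 2 * r = n + k) :
    qNum q (k + 1) * qNum q (n + 1) / (qNum q (l + 1) * qNum q (r + 1) ^ 2) =
      (1 - q ^ 2) * ((1 - (q ^ 2) ^ (k + 1)) * (1 - (q ^ 2) ^ (n + 1))) /
        ((1 - (q ^ 2) ^ (l + 1)) * (1 - (q ^ 2) ^ (r + 1)) ^ 2) := by
  have hpow : q ^ l * (q ^ r) ^ 2 = q ^ k * q ^ n := by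
    rw [← pow_mul, ← pow_add, ← pow_add, mul_comm r, hl, add_comm]
  simp only [qNum_succ]
  by_cases h1 : 1 - q ^ 2 = 0
  · simp [h1]
  field_simp
  rw [mul_assoc _ (q ^ l), hpow]
  ring

lemma one_sub_pow_succ_mem_Icc {t : ℝ} (ht0 : 0 ≤ t) (ht1 : t ≤ 1) (m : ℕ) :
    1 - t ^ (m + 1) ∈ Set.Icc (1 - t) 1 :=
  ⟨by linarith [pow_le_of_le_one ht0 ht1 m.add_one_ne_zero], by linarith [pow_nonneg ht0 (m + 1)]⟩

lemma le_ratio_le_of_mem_Icc {u x y z w : ℝ} (hu : 0 < u) (hx : x ∈ Set.Icc u 1)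
    (hy : y ∈ Set.Icc u 1) (hz : z ∈ Set.Icc u 1) (hw : w ∈ Set.Icc u 1) :
    u ^ 3 ≤ u * (x * y) / (z * w ^ 2) ∧ u * (x * y) / (z * w ^ 2) ≤ (u ^ 2)⁻¹ := by
  obtain ⟨hxu, hx1⟩ := hx
  obtain ⟨hyu, hy1⟩ := hy
  obtain ⟨hzu, hz1⟩ := hz
  obtain ⟨hwu, hw1⟩ := hw
  have hzw : 0 < z * w ^ 2 := by
    have := hu.trans_le hzu; have := hu.trans_le hwu; positivity
  constructor
  · rw [le_div_iff₀ hzw]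
    calc u ^ 3 * (z * w ^ 2) ≤ u ^ 3 * 1 := by gcongr; nlinarith
      _ = u * (u * u) := by ring
      _ ≤ u * (x * y) := by gcongr; linarith
  · rw [div_le_iff₀ hzw, inv_mul_eq_div, le_div_iff₀ (by positivity)]
    calc u * (x * y) * u ^ 2 ≤ u * (1 * 1) * u ^ 2 := by gcongr; linarith
      _ = u * u ^ 2 := by ring
      _ ≤ z * w ^ 2 := by gcongr; linarith

/-- For `0 < q < 1` and nonnegative integers `n, k, l, r` with `l = n + k - 2r` and
`r ≤ min n k`, one has
`(1-q²)³ ≤ [k+1]_q[n+1]_q/([l+1]_q[r+1]_q²) ≤ (1-q²)⁻²`. -/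
theorem qNumber_ratio_bounds (q : ℝ) (hq0 : 0 < q) (hq1 : q < 1) (n k r l : ℕ)
    (hr : r ≤ min n k) (hl : l = n + k - 2 * r) :
    (1 - q ^ 2) ^ 3 ≤ qNum q (k + 1) * qNum q (n + 1) / (qNum q (l + 1) * qNum q (r + 1) ^ 2) ∧
      qNum q (k + 1) * qNum q (n + 1) / (qNum q (l + 1) * qNum q (r + 1) ^ 2) ≤
        ((1 - q ^ 2) ^ 2)⁻¹ := by
  have hlr : l + 2 * r = n + k := by omega
  have ht0 : 0 ≤ q ^ 2 := sq_nonneg q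
  have ht1 : q ^ 2 < 1 := by nlinarith
  have hmem := one_sub_pow_succ_mem_Icc ht0 ht1.le
  rw [qNum_ratio_eq hq0.ne' hlr]
  exact le_ratio_le_of_mem_Icc (sub_pos.2 ht1) (hmem k) (hmem n) (hmem l) (hmem r)
end

section
/- For 0 < q < 1 and nonnegative integers n, k, r with r ≤ min(n,k) and l = n+k-2r, the quantity F(q;n,k,r) := ∏_{s=1}^{r} [1+s]_q [n-r+s]_q [k-r+s]_q / ([l+1+s]_q [s]_q^2) satisfies 1 ≤ F(q;n,k,r) ≤ (∏_{s=1}^{∞} 1/(1-q^{2s}))^3. -/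
/-!
The powers of `q` in the factors cancel, and with `t = q²`, `a = tˢ` the `s`-th factor becomes
`(1 - t a)(1 - tᵐ a)(1 - tʲ a) / ((1 - t tᵐ tʲ a)(1 - a)²)` with `m = n - r`, `j = k - r`.
Since `(1 - x a)(1 - y a) - (1 - a)(1 - x y a) = a (1 - x)(1 - y) ≥ 0`, two applications give
`(1 - a)²(1 - x y z a) ≤ (1 - x a)(1 - y a)(1 - z a)`, so every factor is at least `1`. Bounding
the numerator by `1` and `1 - x y z a` below by `1 - a`, every factor is at most `(1 - tˢ)⁻³`,
and `∏_{s ≤ r} (1 - tˢ)⁻¹` is a partial product of the convergent product `∏_{s ≥ 1} (1 - tˢ)⁻¹`.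
-/

open Finset

theorem one_sub_mul_one_sub_le_one_sub_mul_one_sub {a x y : ℝ} (ha : 0 ≤ a) (hx : x ≤ 1)
    (hy : y ≤ 1) : (1 - a) * (1 - x * y * a) ≤ (1 - x * a) * (1 - y * a) := by
  have key : (1 - x * a) * (1 - y * a) - (1 - a) * (1 - x * y * a) = a * (1 - x) * (1 - y) := by
    ring
  linarith [mul_nonneg (mul_nonneg ha (sub_nonneg.2 hx)) (sub_nonneg.2 hy)]

theorem one_sub_sq_mul_one_sub_le {a x y z : ℝ} (ha0 : 0 ≤ a) (ha1 : a ≤ 1) (hx1 : x ≤ 1)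
    (hy0 : 0 ≤ y) (hy1 : y ≤ 1) (hz1 : z ≤ 1) :
    (1 - a) ^ 2 * (1 - x * y * z * a) ≤ (1 - x * a) * (1 - y * a) * (1 - z * a) := by
  have hxy : x * y ≤ 1 := mul_le_one₀ hx1 hy0 hy1
  have hza : 0 ≤ 1 - z * a := by nlinarith
  calc (1 - a) ^ 2 * (1 - x * y * z * a) = (1 - a) * ((1 - a) * (1 - x * y * z * a)) := by ring
    _ ≤ (1 - a) * ((1 - x * y * a) * (1 - z * a)) :=
      mul_le_mul_of_nonneg_left (one_sub_mul_one_sub_le_one_sub_mul_one_sub ha0 hxy hz1)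
        (by linarith)
    _ = (1 - a) * (1 - x * y * a) * (1 - z * a) := by ring
    _ ≤ (1 - x * a) * (1 - y * a) * (1 - z * a) :=
      mul_le_mul_of_nonneg_right (one_sub_mul_one_sub_le_one_sub_mul_one_sub ha0 hx1 hy1) hza

theorem one_le_div_one_sub_sq_mul_one_sub {a x y z : ℝ} (ha0 : 0 ≤ a) (ha1 : a < 1)
    (hx1 : x ≤ 1) (hy0 : 0 ≤ y) (hy1 : y ≤ 1) (hz0 : 0 ≤ z) (hz1 : z ≤ 1) :
    1 ≤ (1 - x * a) * (1 - y * a) * (1 - z * a) / ((1 - x * y * z * a) * (1 - a) ^ 2) := by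
  have hxyz : x * y * z ≤ 1 := mul_le_one₀ (mul_le_one₀ hx1 hy0 hy1) hz0 hz1
  have hden : 0 < (1 - x * y * z * a) * (1 - a) ^ 2 := by
    have : 0 < 1 - a := by linarith
    have : x * y * z * a < 1 := by nlinarith
    positivity
  rw [one_le_div hden, mul_comm]
  exact one_sub_sq_mul_one_sub_le ha0 ha1.le hx1 hy0 hy1 hz1

theorem div_one_sub_sq_mul_one_sub_le {a x y z : ℝ} (ha0 : 0 ≤ a) (ha1 : a < 1)
    (hx0 : 0 ≤ x) (hx1 : x ≤ 1) (hy0 : 0 ≤ y) (hy1 : y ≤ 1) (hz0 : 0 ≤ z) (hz1 : z ≤ 1) :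
    (1 - x * a) * (1 - y * a) * (1 - z * a) / ((1 - x * y * z * a) * (1 - a) ^ 2) ≤
      ((1 - a)⁻¹) ^ 3 := by
  have hxyz : x * y * z ≤ 1 := mul_le_one₀ (mul_le_one₀ hx1 hy0 hy1) hz0 hz1
  have hfac : ∀ w, 0 ≤ w → w ≤ 1 → 0 ≤ 1 - w * a ∧ 1 - w * a ≤ 1 := fun w hw0 hw1 =>
    ⟨by nlinarith, by nlinarith⟩
  obtain ⟨hx0', hx1'⟩ := hfac x hx0 hx1
  obtain ⟨hy0', hy1'⟩ := hfac y hy0 hy1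
  obtain ⟨hz0', hz1'⟩ := hfac z hz0 hz1
  have hnum : (1 - x * a) * (1 - y * a) * (1 - z * a) ≤ 1 :=
    mul_le_one₀ (mul_le_one₀ hx1' hy0' hy1') hz0' hz1'
  have ha : 0 < 1 - a := by linarith
  have hden : 1 - a ≤ 1 - x * y * z * a := by nlinarith
  rw [inv_pow, ← one_div]
  gcongr
  calc (1 - a) ^ 3 = (1 - a) * (1 - a) ^ 2 := by ring
      _ ≤ _ := by gcongr

theorem qNum_ratio_eq_s4 {q : ℝ} (hq0 : q ≠ 0) (hq1 : 1 - q ^ 2 ≠ 0) (m j s : ℕ) :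
    qNum q (1 + s) * qNum q (m + s) * qNum q (j + s) / (qNum q (m + j + 1 + s) * qNum q s ^ 2) =
      (1 - q ^ 2 * (q ^ 2) ^ s) * (1 - (q ^ 2) ^ m * (q ^ 2) ^ s) *
          (1 - (q ^ 2) ^ j * (q ^ 2) ^ s) /
        ((1 - q ^ 2 * (q ^ 2) ^ m * (q ^ 2) ^ j * (q ^ 2) ^ s) * (1 - (q ^ 2) ^ s) ^ 2) := by
  simp only [qNum, zpow_sub₀ hq0, zpow_one, zpow_natCast]
  field_simp
  ring

theorem prod_le_tprod_of_one_le {ι : Type*} {f : ι → ℝ} (hf : ∀ i, 1 ≤ f i)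
    (hm : Multipliable f) (s : Finset ι) : ∏ i ∈ s, f i ≤ ∏' i, f i :=
  ge_of_tendsto hm.hasProd
    (Filter.eventually_atTop.2 ⟨s, fun _ hst => prod_mono_set_of_one_le hf hst⟩)

theorem multipliable_inv_one_sub {ι : Type*} {f : ι → ℝ} {c : ℝ} (hf0 : ∀ i, 0 ≤ f i)
    (hfc : ∀ i, f i ≤ c) (hc : c < 1) (hf : Summable f) :
    Multipliable fun i => (1 - f i)⁻¹ := by
  have hpos : ∀ i, 0 < 1 - f i := fun i => by linarith [hfc i]
  have hg : Summable fun i => f i / (1 - f i) := by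
    refine (hf.div_const (1 - c)).of_nonneg_of_le (fun i => div_nonneg (hf0 i) (hpos i).le)
      fun i => div_le_div_of_nonneg_left (hf0 i) (by linarith) (by linarith [hfc i])
  refine (Real.multipliable_one_add_of_summable hg).congr fun i => ?_
  field_simp [(hpos i).ne']
  ring

theorem one_le_inv_one_sub {x : ℝ} (hx0 : 0 ≤ x) (hx1 : x < 1) : 1 ≤ (1 - x)⁻¹ :=
  one_le_inv₀ (by linarith) |>.2 (by linarith)

theorem prod_Icc_inv_one_sub_pow_le_tprod {t : ℝ} (ht0 : 0 ≤ t) (ht1 : t < 1) (r : ℕ) :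
    ∏ s ∈ Icc 1 r, (1 - t ^ s)⁻¹ ≤ ∏' i : ℕ, (1 - t ^ (i + 1))⁻¹ := by
  have hpow : ∀ i : ℕ, t ^ (i + 1) ≤ t := fun i => pow_le_of_le_one ht0 ht1.le i.succ_ne_zero
  have hm : Multipliable fun i : ℕ => (1 - t ^ (i + 1))⁻¹ :=
    multipliable_inv_one_sub (fun i => pow_nonneg ht0 _) hpow ht1
      ((summable_nat_add_iff 1).2 (summable_geometric_of_lt_one ht0 ht1))
  rw [← Ico_add_one_right_eq_Icc, prod_Ico_eq_prod_range, Nat.add_sub_cancel]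
  simp_rw [add_comm 1]
  exact prod_le_tprod_of_one_le (fun i => one_le_inv_one_sub (pow_nonneg ht0 _)
    ((hpow i).trans_lt ht1)) hm _

/-- For `0 < q < 1` and `r ≤ min n k`, with `l = n + k - 2r`, the quantity
`F(q;n,k,r) = ∏_{s=1}^r [1+s]_q[n-r+s]_q[k-r+s]_q/([l+1+s]_q[s]_q²)` satisfies
`1 ≤ F(q;n,k,r) ≤ (∏_{s=1}^∞ 1/(1-q^{2s}))³`. -/
theorem threeVertex_norm_bounds (q : ℝ) (hq0 : 0 < q) (hq1 : q < 1) (n k r : ℕ)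
    (hr : r ≤ min n k) :
    1 ≤ ∏ s ∈ Finset.Icc 1 r,
        qNum q (1 + s) * qNum q (n - r + s) * qNum q (k - r + s) /
          (qNum q (n + k - 2 * r + 1 + s) * qNum q s ^ 2) ∧
      ∏ s ∈ Finset.Icc 1 r,
        qNum q (1 + s) * qNum q (n - r + s) * qNum q (k - r + s) /
          (qNum q (n + k - 2 * r + 1 + s) * qNum q s ^ 2) ≤
        (∏' s : ℕ, (1 - q ^ (2 * s + 2))⁻¹) ^ 3 := by
  have ht1 : q ^ 2 < 1 := pow_lt_one₀ hq0.le hq1 two_ne_zero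
  rw [show n + k - 2 * r = n - r + (k - r) by omega,
    prod_congr rfl fun s _ => qNum_ratio_eq_s4 hq0.ne' (sub_ne_zero.2 ht1.ne') (n - r) (k - r) s]
  set t := q ^ 2
  have ht0 : 0 ≤ t := by positivity
  have hpow : ∀ i : ℕ, 0 ≤ t ^ i ∧ t ^ i ≤ 1 := fun i => ⟨pow_nonneg ht0 i, pow_le_one₀ ht0 ht1.le⟩
  have hpow_lt : ∀ s ∈ Icc 1 r, t ^ s < 1 := fun s hs =>
    pow_lt_one₀ ht0 ht1 (by rw [mem_Icc] at hs; omega)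
  have hlower := fun s hs => one_le_div_one_sub_sq_mul_one_sub (hpow s).1 (hpow_lt s hs) ht1.le
    (hpow (n - r)).1 (hpow (n - r)).2 (hpow (k - r)).1 (hpow (k - r)).2
  refine ⟨one_le_prod hlower, ?_⟩
  calc _ ≤ ∏ s ∈ Icc 1 r, ((1 - t ^ s)⁻¹) ^ 3 :=
        prod_le_prod (fun s hs => zero_le_one.trans (hlower s hs)) fun s hs =>
          div_one_sub_sq_mul_one_sub_le (hpow s).1 (hpow_lt s hs) ht0 ht1.le (hpow (n - r)).1
            (hpow (n - r)).2 (hpow (k - r)).1 (hpow (k - r)).2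
    _ = (∏ s ∈ Icc 1 r, (1 - t ^ s)⁻¹) ^ 3 := prod_pow _ _ _
    _ ≤ (∏' i : ℕ, (1 - t ^ (i + 1))⁻¹) ^ 3 :=
        pow_le_pow_left₀ (prod_nonneg fun s hs => (inv_pos.2 (sub_pos.2 (hpow_lt s hs))).le)
          (prod_Icc_inv_one_sub_pow_le_tprod ht0 ht1 r) 3
    _ = (∏' s : ℕ, (1 - q ^ (2 * s + 2))⁻¹) ^ 3 := by simp_rw [t, ← pow_mul, mul_add]
end

section
/- Let A be a unital C*-algebra with a faithful tracial state τ, and let x ∈ A. Then for every ε > 0 there exists an even integer p such that ‖x‖ ≤ (1+ε) · τ((x*x)^{p/2})^{1/p}; equivalently, the L^p norms τ((x*x)^{p/2})^{1/p} converge to ‖x‖ as p → ∞ through even integers. -/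
/-!
For `a = x⋆x ≥ 0` and `0 ≤ r < ‖a‖ = ‖x‖²`, continuous functional calculus gives `b = f(a) ≠ 0`,
where `f` vanishes on `[0, r]`, takes values in `[0, 1]` and is positive at `‖a‖ ∈ σ(a)`; hence
`rⁿ b⋆b ≤ aⁿ`. Positivity and faithfulness of `τ` turn this into `τ(aⁿ) ≥ c rⁿ` with
`c = τ(b⋆b) > 0`, and as `c^{1/n} → 1`, `τ(aⁿ)^{1/n}` eventually exceeds every `q < ‖a‖`.
Taking square roots gives the bound for `p = 2n`.
-/

open scoped ComplexOrder
open Filter Topology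

section CStarAlgebra

variable {A : Type*} [CStarAlgebra A] [PartialOrder A] [StarOrderedRing A]

theorem LinearMap.monotone_of_map_star_mul_self_nonneg (τ : A →ₗ[ℂ] ℂ)
    (hτpos : ∀ a : A, 0 ≤ τ (star a * a)) : Monotone τ := by
  intro z w hzw
  rw [← sub_nonneg] at hzw ⊢
  obtain ⟨b, hb⟩ := CStarAlgebra.nonneg_iff_eq_star_mul_self.mp hzw
  rw [← map_sub, hb]
  exact hτpos b

theorem exists_ne_zero_pow_smul_star_mul_self_le_pow {a : A} (ha : 0 ≤ a) {r : ℝ} (hr0 : 0 ≤ r)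
    (hr : r < ‖a‖) : ∃ b : A, b ≠ 0 ∧ ∀ n : ℕ, r ^ n • (star b * b) ≤ a ^ n := by
  set f : ℝ → ℝ := fun t ↦ min (max (t - r) 0) 1
  have hf : Continuous f := by fun_prop
  have : Nontrivial A := nontrivial_of_ne a 0 (norm_pos_iff.mp (hr0.trans_lt hr))
  refine ⟨cfc f a, fun hb ↦ ?_, fun n ↦ ?_⟩
  · have := norm_apply_le_norm_cfc f a (CStarAlgebra.norm_mem_spectrum_of_nonneg ha)
    rw [hb, norm_zero, norm_le_zero_iff] at this
    have hfa : 0 < f ‖a‖ := lt_min (lt_max_of_lt_left (sub_pos.mpr hr)) one_pos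
    linarith
  rw [(cfc_predicate f a : IsSelfAdjoint _).star_eq,
    ← cfc_mul f f a hf.continuousOn hf.continuousOn,
    ← cfc_const_mul _ (fun t ↦ f t * f t) a (hf.mul hf).continuousOn, ← cfc_pow_id (R := ℝ) a n]
  refine cfc_mono fun t ht ↦ ?_
  have ht0 : 0 ≤ t := spectrum_nonneg_of_nonneg ha ht
  rcases le_or_gt t r with htr | hrt
  · have : f t = 0 := by simp [f, htr]
    simp [this, pow_nonneg ht0]
  · have hf0 : 0 ≤ f t := le_min (le_max_right _ _) zero_le_one
    have hf1 : f t ≤ 1 := min_le_right _ _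
    calc r ^ n * (f t * f t) ≤ r ^ n * 1 := by gcongr; nlinarith
      _ ≤ t ^ n := by rw [mul_one]; exact pow_le_pow_left₀ hr0 hrt.le n

theorem exists_pos_pow_mul_le_re_map_pow (τ : A →ₗ[ℂ] ℂ)
    (hτpos : ∀ a : A, 0 ≤ τ (star a * a)) (hτfaith : ∀ a : A, τ (star a * a) = 0 → a = 0)
    {a : A} (ha : 0 ≤ a) {r : ℝ} (hr0 : 0 ≤ r) (hr : r < ‖a‖) :
    ∃ c > 0, ∀ n : ℕ, r ^ n * c ≤ (τ (a ^ n)).re := by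
  obtain ⟨b, hb, hle⟩ := exists_ne_zero_pow_smul_star_mul_self_le_pow ha hr0 hr
  have hc : 0 < τ (star b * b) := (hτpos b).lt_of_ne fun h ↦ hb (hτfaith b h.symm)
  refine ⟨(τ (star b * b)).re, (Complex.pos_iff.mp hc).1, fun n ↦ ?_⟩
  have := (Complex.le_def.mp (τ.monotone_of_map_star_mul_self_nonneg hτpos (hle n))).1
  rwa [LinearMap.map_smul_of_tower, Complex.smul_re, smul_eq_mul] at this

end CStarAlgebra

theorem eventually_le_rpow_one_div_of_pow_mul_le {u : ℕ → ℝ} {s : ℝ}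
    (hu : ∀ r, 0 ≤ r → r < s → ∃ c > 0, ∀ n : ℕ, r ^ n * c ≤ u n) {q : ℝ} (hq0 : 0 < q)
    (hqs : q < s) : ∀ᶠ n : ℕ in atTop, q ≤ u n ^ ((1 : ℝ) / n) := by
  obtain ⟨r, hqr, hrs⟩ := exists_between hqs
  have hr0 : 0 < r := hq0.trans hqr
  obtain ⟨c, hc, hcu⟩ := hu r hr0.le hrs
  have hroot : Tendsto (fun n : ℕ ↦ c ^ ((1 : ℝ) / n)) atTop (𝓝 1) := by
    simpa using tendsto_const_nhds.rpow tendsto_one_div_atTop_nhds_zero_nat (Or.inl hc.ne')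
  have hqr : q / r < 1 := (div_lt_one hr0).mpr hqr
  filter_upwards [hroot.eventually_const_lt hqr, eventually_ge_atTop 1] with n hn hn1
  calc q = r * (q / r) := by field_simp
    _ ≤ r * c ^ ((1 : ℝ) / n) := by gcongr
    _ = (r ^ n * c) ^ ((1 : ℝ) / n) := by
      rw [Real.mul_rpow (by positivity) hc.le, one_div,
        Real.pow_rpow_inv_natCast hr0.le (by omega)]
    _ ≤ u n ^ ((1 : ℝ) / n) := by gcongr; exact hcu n

theorem lp_norms_approximate_operator_norm_general
    {A : Type*} [NormedRing A] [StarRing A] [CStarRing A] [NormedAlgebra ℂ A]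
    [CompleteSpace A] [StarModule ℂ A]
    (τ : A →ₗ[ℂ] ℂ)
    (hτpos : ∀ a : A, 0 ≤ τ (star a * a))
    (hτfaith : ∀ a : A, τ (star a * a) = 0 → a = 0)
    (x : A) : ∀ ε : ℝ, 0 < ε → ∃ p : ℕ, Even p ∧ 0 < p ∧
      ‖x‖ ≤ (1 + ε) * (τ ((star x * x) ^ (p / 2))).re ^ ((1 : ℝ) / p) := by
  intro ε hε
  let _ : CStarAlgebra A := {}
  let _ := CStarAlgebra.spectralOrder A
  have := CStarAlgebra.spectralOrderedRing A
  set a := star x * x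
  have ha : 0 ≤ a := star_mul_self_nonneg x
  have hτa (n : ℕ) : 0 ≤ (τ (a ^ n)).re := by
    simpa using (Complex.le_def.mp
      (τ.monotone_of_map_star_mul_self_nonneg hτpos (CStarAlgebra.pow_nonneg ha n))).1
  rcases (norm_nonneg x).eq_or_lt with hx | hx
  · exact ⟨2, even_two, two_pos, hx ▸ mul_nonneg (by linarith) (Real.rpow_nonneg (hτa _) _)⟩
  have hna : ‖a‖ = ‖x‖ ^ 2 := by rw [CStarRing.norm_star_mul_self, sq]
  have hq0 : 0 < ‖a‖ / (1 + ε) ^ 2 := by rw [hna]; positivity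
  have hq : ‖a‖ / (1 + ε) ^ 2 < ‖a‖ := div_lt_self (by rw [hna]; positivity) (by nlinarith)
  obtain ⟨n, hn, hn1⟩ := ((eventually_le_rpow_one_div_of_pow_mul_le
    (fun r hr0 hr ↦ exists_pos_pow_mul_le_re_map_pow τ hτpos hτfaith ha hr0 hr) hq0 hq).and
    (eventually_ge_atTop 1)).exists
  refine ⟨2 * n, even_two_mul n, by omega, ?_⟩
  calc ‖x‖ = (1 + ε) * √(‖a‖ / (1 + ε) ^ 2) := by
        rw [hna, Real.sqrt_div' _ (by positivity), Real.sqrt_sq hx.le,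
          Real.sqrt_sq (by positivity)]
        field_simp
    _ ≤ (1 + ε) * √((τ (a ^ n)).re ^ ((1 : ℝ) / n)) := by gcongr
    _ = _ := by
        rw [Real.sqrt_eq_rpow, ← Real.rpow_mul (hτa n), Nat.mul_div_cancel_left n two_pos]
        congr 2
        push_cast
        field_simp

/-- In a unital C*-algebra with a faithful tracial state `τ`, for every `x` and every
`ε > 0` there is an even integer `p` with `‖x‖ ≤ (1+ε)·τ((x*x)^{p/2})^{1/p}`;
equivalently the `L^p` norms converge to `‖x‖` as `p → ∞` through even integers. -/
theorem lp_norms_approximate_operator_norm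
    {A : Type*} [NormedRing A] [StarRing A] [CStarRing A] [NormedAlgebra ℂ A]
    [CompleteSpace A] [StarModule ℂ A]
    (τ : A →ₗ[ℂ] ℂ) (hτ1 : τ 1 = 1)
    (hτpos : ∀ a : A, 0 ≤ τ (star a * a))
    (hτfaith : ∀ a : A, τ (star a * a) = 0 → a = 0)
    (hτtr : ∀ a b : A, τ (a * b) = τ (b * a))
    (x : A) : ∀ ε : ℝ, 0 < ε → ∃ p : ℕ, Even p ∧ 0 < p ∧
      ‖x‖ ≤ (1 + ε) * (τ ((star x * x) ^ (p / 2))).re ^ ((1 : ℝ) / p) :=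
  lp_norms_approximate_operator_norm_general τ hτpos hτfaith x
end

section
/- Let (A_N, φ_N) be a sequence of C*-probability spaces with faithful tracial states and (M, τ) a tracial von Neumann algebra. Suppose x_N ∈ A_N and x ∈ M satisfy: (i) φ_N((x_N* x_N)^m) → τ((x*x)^m) for every m ∈ ℕ, and (ii) there are constants D_N with sup_N D_N < ∞ and D_N → 1 and a fixed r independent of N and m such that for all m, ‖x_N‖^{2m} ≤ D_N (2rm+1)^{3/2} φ_N((x_N*x_N)^{2m})^{1/2}. Then lim_{N→∞} ‖x_N‖ = ‖x‖. -/
open scoped ComplexOrder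

open Filter

lemma star_smul_of_state {M : Type*} [Ring M] [Algebra ℂ M] [StarRing M]
    (τ : M →ₗ[ℂ] ℂ) (hτ1 : τ 1 = 1) (hτpos : ∀ a : M, 0 ≤ τ (star a * a))
    (hτfaith : ∀ a : M, τ (star a * a) = 0 → a = 0) (z : ℂ) (a : M) :
    star (z • a) = star z • star a := by
  classical
  set ψ : ℂ → M := fun w => star (w • (1 : M)) with hψdef
  have smul_eq : ∀ (w : ℂ) (b : M), w • b = (w • (1 : M)) * b := by
    intro w b; rw [smul_mul_assoc, one_mul]
  have smul_eq' : ∀ (w : ℂ) (b : M), w • b = b * (w • (1 : M)) := by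
    intro w b; rw [mul_smul_comm, mul_one]
  have hstar_smul : ∀ (w : ℂ) (b : M), star (w • b) = star b * ψ w := by
    intro w b; rw [smul_eq, star_mul]
  have hψmul : ∀ w₁ w₂ : ℂ, ψ (w₁ * w₂) = ψ w₁ * ψ w₂ := by
    intro w₁ w₂
    have h1 : (w₁ * w₂) • (1 : M) = (w₂ • (1 : M)) * (w₁ • (1 : M)) := by
      rw [smul_mul_assoc, mul_smul_comm, mul_one, smul_smul, mul_comm w₂ w₁]
    simp only [hψdef, h1, star_mul]
  have hψ1 : ψ 1 = 1 := by simp [hψdef]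
  have hsψ : ∀ w : ℂ, star (ψ w) = w • 1 := fun w => star_star _
  -- the additive map `F w = τ (ψ w)`
  set F : ℂ →+ ℂ := AddMonoidHom.mk' (fun w => τ (ψ w))
    (by intro w₁ w₂; simp [hψdef, add_smul, star_add]) with hFdef
  have hF1 : F 1 = 1 := by simp [hFdef, hψ1, hτ1]
  have hFq : ∀ q : ℚ, F (q : ℂ) = (q : ℂ) := by
    intro q
    have := map_ratCast_smul F ℂ ℂ q (1 : ℂ)
    simpa [hF1] using this
  have hpos' : ∀ w : ℂ, 0 ≤ w * F w := by
    intro w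
    have h1 : star (w • (1 : M)) * (w • (1 : M)) = w • ψ w := by
      rw [smul_eq' w (ψ w)]
    have := hτpos (w • (1 : M))
    rw [h1] at this
    simpa [hFdef] using this
  -- F is the conjugation on real numbers
  have hreal : ∀ x : ℝ, F (x : ℂ) = (x : ℂ) := by
    intro x
    set w : ℂ := F (x : ℂ) with hw
    have key : ∀ q : ℚ, 0 ≤ ((x : ℂ) - (q : ℂ)) * (w - (q : ℂ)) := by
      intro q
      have := hpos' ((x : ℂ) - (q : ℂ))
      rwa [map_sub, hFq, ← hw] at this
    have him : w.im = 0 := by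
      have h0 := (Complex.le_def.mp (key 0)).2
      have h1 := (Complex.le_def.mp (key 1)).2
      simp only [Complex.mul_im, Complex.sub_re, Complex.sub_im, Complex.ofReal_re,
        Complex.ofReal_im, Complex.zero_im, Complex.zero_re, Complex.ratCast_re,
        Complex.ratCast_im, Rat.cast_zero, Rat.cast_one, Complex.one_re, Complex.one_im] at h0 h1
      linear_combination h1 - h0
    have hre : w.re = x := by
      by_contra hne
      rcases lt_or_gt_of_ne hne with hlt | hgt
      · obtain ⟨q, hq1, hq2⟩ := exists_rat_btwn hlt
        have := (Complex.le_def.mp (key q)).1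
        simp only [Complex.mul_re, Complex.sub_re, Complex.sub_im, Complex.ofReal_re,
          Complex.ofReal_im, Complex.zero_re, Complex.ratCast_re, Complex.ratCast_im,
          him] at this
        nlinarith
      · obtain ⟨q, hq1, hq2⟩ := exists_rat_btwn hgt
        have := (Complex.le_def.mp (key q)).1
        simp only [Complex.mul_re, Complex.sub_re, Complex.sub_im, Complex.ofReal_re,
          Complex.ofReal_im, Complex.zero_re, Complex.ratCast_re, Complex.ratCast_im,
          him] at this
        nlinarith
    rw [Complex.ext_iff]
    constructor
    · simpa using hre
    · simpa using him
  have himag : ∀ t : ℝ, F ((t : ℂ) * Complex.I) = -((t : ℂ) * Complex.I) := by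
    intro t
    rcases eq_or_ne t 0 with rfl | ht
    · simp
    set w : ℂ := F ((t : ℂ) * Complex.I) with hw
    have h1 := hpos' ((t : ℂ) * Complex.I)
    rw [← hw] at h1
    have h1im := (Complex.le_def.mp h1).2
    simp only [Complex.zero_im, Complex.mul_im, Complex.mul_re, Complex.I_re, Complex.I_im,
      Complex.ofReal_re, Complex.ofReal_im] at h1im
    have h1im' : t * w.re = 0 := by linarith [h1im]
    have hre : w.re = 0 := by
      rcases mul_eq_zero.mp h1im' with h | h
      · exact absurd h ht
      · exact h
    have h2 := hpos' (1 + (t : ℂ) * Complex.I)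
    rw [map_add, hF1, ← hw] at h2
    have h2im := (Complex.le_def.mp h2).2
    simp only [Complex.zero_im, Complex.add_re, Complex.add_im, Complex.mul_re, Complex.mul_im,
      Complex.I_re, Complex.I_im, Complex.one_re, Complex.one_im, Complex.ofReal_re,
      Complex.ofReal_im, hre] at h2im
    have him : w.im = -t := by linarith [h2im]
    rw [Complex.ext_iff]
    refine ⟨by simp [hre], by simp [him]⟩
  have hFconj : ∀ u : ℂ, F u = (starRingEnd ℂ) u := by
    intro u
    have hu : u = (u.re : ℂ) + (u.im : ℂ) * Complex.I := (Complex.re_add_im u).symm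
    calc F u = F ((u.re : ℂ)) + F ((u.im : ℂ) * Complex.I) := by rw [← map_add]; rw [← hu]
    _ = (u.re : ℂ) - (u.im : ℂ) * Complex.I := by rw [hreal, himag]; ring
    _ = (starRingEnd ℂ) u := by rw [Complex.ext_iff]; simp
  have hτψ : ∀ u : ℂ, τ (ψ u) = (starRingEnd ℂ) u := fun u => hFconj u
  have hψconj : ∀ w : ℂ, ψ w = ((starRingEnd ℂ) w) • (1 : M) := by
    intro w
    have hsw : star (ψ w - ((starRingEnd ℂ) w) • 1) = (w • 1 : M) - ψ ((starRingEnd ℂ) w) := by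
      rw [star_sub, hsψ]
    have hprod : star (ψ w - ((starRingEnd ℂ) w) • 1) * (ψ w - ((starRingEnd ℂ) w) • 1)
        = w • ψ w - (w * (starRingEnd ℂ) w) • (1:M) - ψ ((starRingEnd ℂ) w * w)
          + (starRingEnd ℂ) w • ψ ((starRingEnd ℂ) w) := by
      rw [hsw, sub_mul, mul_sub, mul_sub]
      have e1 : (w • (1:M)) * ψ w = w • ψ w := (smul_eq w (ψ w)).symm
      have e2 : (w • (1:M)) * (((starRingEnd ℂ) w) • (1:M)) = (w * (starRingEnd ℂ) w) • (1:M) := by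
        rw [smul_mul_assoc, mul_smul_comm, mul_one, smul_smul]
      have e3 : ψ ((starRingEnd ℂ) w) * ψ w = ψ ((starRingEnd ℂ) w * w) :=
        (hψmul _ _).symm
      have e4 : ψ ((starRingEnd ℂ) w) * (((starRingEnd ℂ) w) • (1:M))
          = (starRingEnd ℂ) w • ψ ((starRingEnd ℂ) w) := (smul_eq' _ _).symm
      rw [e1, e2, e3, e4]
      abel
    have hτ0 : τ (star (ψ w - ((starRingEnd ℂ) w) • 1) * (ψ w - ((starRingEnd ℂ) w) • 1)) = 0 := by
      rw [hprod]
      simp only [map_sub, map_add, map_smul, smul_eq_mul, hτψ, hτ1, map_mul, Complex.conj_conj,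
        mul_one]
      ring
    have h0 := hτfaith _ hτ0
    exact sub_eq_zero.mp h0
  rw [hstar_smul, hψconj, ← smul_eq']
  rw [Complex.star_def]

lemma state_nonneg_aux {A : Type*} [CStarAlgebra A] [PartialOrder A] [StarOrderedRing A]
    (φ : A →ₗ[ℂ] ℂ) (hφpos : ∀ a : A, 0 ≤ φ (star a * a)) {d : A} (hd : 0 ≤ d) :
    0 ≤ φ d := by
  have h := CFC.sqrt_mul_sqrt_self d hd
  have hsa : IsSelfAdjoint (CFC.sqrt d) := IsSelfAdjoint.of_nonneg (CFC.sqrt_nonneg d)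
  have h2 := hφpos (CFC.sqrt d)
  rwa [hsa.star_eq, h] at h2

lemma complex_eq_re_of_nonneg {z : ℂ} (h : 0 ≤ z) : z = ((z.re : ℝ) : ℂ) := by
  have h2 := (Complex.le_def.mp h).2
  rw [Complex.ext_iff]
  refine ⟨by simp, by simp [← h2]⟩

lemma state_moment_props {A : Type*} [NormedRing A] [StarRing A] [CStarRing A]
    [NormedAlgebra ℂ A] [CompleteSpace A]
    (φ : A →ₗ[ℂ] ℂ) (hφ1 : φ 1 = 1) (hφpos : ∀ a : A, 0 ≤ φ (star a * a))
    (hφfaith : ∀ a : A, φ (star a * a) = 0 → a = 0) (a : A) (m : ℕ) :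
    0 ≤ (φ ((star a * a) ^ m)).re ∧ (φ ((star a * a) ^ m)).re ≤ ‖a‖ ^ (2 * m) := by
  haveI : StarModule ℂ A := ⟨star_smul_of_state φ hφ1 hφpos hφfaith⟩
  letI : CStarAlgebra A := { }
  letI := CStarAlgebra.spectralOrder A
  haveI := CStarAlgebra.spectralOrderedRing A
  have hsa0 : (0:A) ≤ star a * a := star_mul_self_nonneg a
  have hsa : IsSelfAdjoint (star a * a) := IsSelfAdjoint.star_mul_self a
  have hpow : (0:A) ≤ (star a * a) ^ m := by
    rw [← cfc_pow_id (R := ℝ) (star a * a) m hsa]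
    exact cfc_nonneg fun x hx => pow_nonneg (spectrum_nonneg_of_nonneg hsa0 hx) m
  have h0 : 0 ≤ φ ((star a * a) ^ m) := state_nonneg_aux φ hφpos hpow
  constructor
  · simpa using (Complex.le_def.mp h0).1
  · rcases Nat.eq_zero_or_pos m with rfl | hm
    · simp [hφ1]
    · have hle : (star a * a) ^ m ≤ algebraMap ℝ A (‖(star a * a) ^ m‖) :=
        IsSelfAdjoint.le_algebraMap_norm_self (hsa.pow m)
      have hd : 0 ≤ φ (algebraMap ℝ A (‖(star a * a) ^ m‖) - (star a * a) ^ m) :=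
        state_nonneg_aux φ hφpos (sub_nonneg.mpr hle)
      have hφalg : φ (algebraMap ℝ A (‖(star a * a) ^ m‖)) = ((‖(star a * a) ^ m‖ : ℝ) : ℂ) := by
        rw [IsScalarTower.algebraMap_apply ℝ ℂ A, Algebra.algebraMap_eq_smul_one, map_smul,
          hφ1, smul_eq_mul, mul_one, Complex.coe_algebraMap]
      rw [map_sub, hφalg] at hd
      have hre := (Complex.le_def.mp hd).1
      simp only [Complex.zero_re, Complex.sub_re, Complex.ofReal_re] at hre
      have hnorm : ‖(star a * a) ^ m‖ ≤ ‖a‖ ^ (2 * m) := by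
        calc ‖(star a * a) ^ m‖ ≤ ‖star a * a‖ ^ m := norm_pow_le' _ hm
        _ = (‖a‖ * ‖a‖) ^ m := by rw [CStarRing.norm_star_mul_self]
        _ = ‖a‖ ^ (2 * m) := by rw [← sq, ← pow_mul]
      linarith

lemma state_moment_lower {A : Type*} [NormedRing A] [StarRing A] [CStarRing A]
    [NormedAlgebra ℂ A] [CompleteSpace A]
    (φ : A →ₗ[ℂ] ℂ) (hφ1 : φ 1 = 1) (hφpos : ∀ a : A, 0 ≤ φ (star a * a))
    (hφfaith : ∀ a : A, φ (star a * a) = 0 → a = 0) (a : A) {θ : ℝ}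
    (hθ0 : 0 ≤ θ) (hθ : θ < ‖a‖ ^ 2) :
    ∃ c : ℝ, 0 < c ∧ ∀ m : ℕ, c * θ ^ m ≤ (φ ((star a * a) ^ m)).re := by
  haveI : StarModule ℂ A := ⟨star_smul_of_state φ hφ1 hφpos hφfaith⟩
  letI : CStarAlgebra A := { }
  letI := CStarAlgebra.spectralOrder A
  haveI := CStarAlgebra.spectralOrderedRing A
  haveI : Nontrivial A := by
    refine nontrivial_of_ne 1 0 fun h => ?_
    rw [h, map_zero] at hφ1
    exact one_ne_zero hφ1.symm
  have hsa0 : (0:A) ≤ star a * a := star_mul_self_nonneg a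
  have hsa : IsSelfAdjoint (star a * a) := IsSelfAdjoint.star_mul_self a
  set sa := star a * a with hsadef
  have hnsa : ‖sa‖ = ‖a‖ ^ 2 := by rw [hsadef, CStarRing.norm_star_mul_self, sq]
  have hθ' : θ < ‖sa‖ := hnsa ▸ hθ
  have hε : 0 < ‖sa‖ - θ := by linarith
  set ε := ‖sa‖ - θ with hεdef
  set f : ℝ → ℝ := fun t => max 0 (min 1 ((t - θ) / ε)) with hfdef
  have hfc : Continuous f := by fun_prop
  set b := cfc f sa with hbdef
  have hb0 : 0 ≤ b := cfc_nonneg fun x _ => le_max_left _ _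
  have hbsa : IsSelfAdjoint b := IsSelfAdjoint.of_nonneg hb0
  have hfnorm : f ‖sa‖ = 1 := by
    rw [hfdef]
    simp only
    rw [show (‖sa‖ - θ) / ε = 1 from div_self hε.ne']
    norm_num
  have hbne : b ≠ 0 := by
    intro hb
    have hspec : spectrum ℝ b = f '' spectrum ℝ sa := cfc_map_spectrum f sa (ha := hsa) (hf := hfc.continuousOn)
    have h1 : (1:ℝ) ∈ spectrum ℝ b := by
      rw [hspec]
      exact ⟨‖sa‖, CStarAlgebra.norm_mem_spectrum_of_nonneg hsa0, hfnorm⟩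
    rw [hb, spectrum.zero_eq] at h1
    simp at h1
  have hφb := hφpos b
  have hφbre : 0 < (φ (star b * b)).re := by
    rcases lt_or_eq_of_le (Complex.le_def.mp hφb).1 with h | h
    · simpa using h
    · exfalso
      apply hbne
      apply hφfaith
      rw [complex_eq_re_of_nonneg hφb, ← h]
      simp
  refine ⟨(φ (star b * b)).re, hφbre, fun m => ?_⟩
  have hkey : (θ ^ m) • (star b * b) ≤ sa ^ m := by
    have hc1 : star b * b = cfc (fun t => f t * f t) sa := by
      rw [hbsa.star_eq, hbdef, ← cfc_mul f f sa hfc.continuousOn hfc.continuousOn]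
    have hc2 : (θ ^ m) • (star b * b) = cfc (fun t => θ ^ m * (f t * f t)) sa := by
      rw [hc1, ← cfc_const_mul (θ ^ m) (fun t => f t * f t) sa ((hfc.mul hfc).continuousOn)]
    rw [hc2, ← cfc_pow_id (R := ℝ) sa m hsa]
    refine cfc_mono ?_ ((continuous_const.mul (hfc.mul hfc)).continuousOn)
      ((continuous_pow m).continuousOn)
    intro t ht
    have ht0 : 0 ≤ t := spectrum_nonneg_of_nonneg hsa0 ht
    rcases le_or_gt t θ with htθ | htθ
    · have hft : f t = 0 := by
        rw [hfdef]
        simp only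
        rw [min_eq_right (by
          apply (div_le_one hε).mpr
          linarith), max_eq_left (by
          apply div_nonpos_of_nonpos_of_nonneg <;> linarith)]
      rw [hft]
      simpa using pow_nonneg ht0 m
    · have hstep : θ ^ m * (f t * f t) ≤ θ ^ m * 1 := by
        have h1 : 0 ≤ f t := le_max_left _ _
        have h2 : f t ≤ 1 := max_le zero_le_one (min_le_left _ _)
        have h3 : 0 ≤ θ ^ m := pow_nonneg hθ0 m
        have h4 : f t * f t ≤ 1 := by nlinarith
        exact mul_le_mul_of_nonneg_left h4 h3
      calc θ ^ m * (f t * f t) ≤ θ ^ m * 1 := hstep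
      _ = θ ^ m := mul_one _
      _ ≤ t ^ m := pow_le_pow_left₀ hθ0 htθ.le m
  have hsub : 0 ≤ φ (sa ^ m - (θ ^ m) • (star b * b)) :=
    state_nonneg_aux φ hφpos (sub_nonneg.mpr hkey)
  have hsmul : φ ((θ ^ m : ℝ) • (star b * b)) = ((θ ^ m : ℝ) : ℂ) * φ (star b * b) := by
    rw [show ((θ ^ m : ℝ)) • (star b * b) = ((θ ^ m : ℝ) : ℂ) • (star b * b) by
      rw [← Complex.coe_algebraMap, algebraMap_smul], map_smul, smul_eq_mul]
  rw [map_sub, hsmul] at hsub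
  have hre := (Complex.le_def.mp hsub).1
  rw [complex_eq_re_of_nonneg hφb] at hre
  simp only [Complex.zero_re, Complex.sub_re, ← Complex.ofReal_mul, Complex.ofReal_re] at hre
  linarith

/-- Transfer from moment convergence plus a uniform rapid decay estimate to operator
norm convergence: if `φ_N`-moments of `x_N` converge to the `τ`-moments of `x`, and
`‖x_N‖^{2m} ≤ D_N (2rm+1)^{3/2} φ_N((x_N* x_N)^{2m})^{1/2}` with `D_N → 1` uniformly
bounded, then `‖x_N‖ → ‖x‖`. -/
theorem norm_convergence_from_moments_and_RD
    (A : ℕ → Type*) [∀ N, NormedRing (A N)] [∀ N, StarRing (A N)] [∀ N, CStarRing (A N)]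
    [∀ N, NormedAlgebra ℂ (A N)] [∀ N, CompleteSpace (A N)]
    (M : Type*) [NormedRing M] [StarRing M] [CStarRing M] [NormedAlgebra ℂ M]
    [CompleteSpace M]
    (φ : ∀ N, A N →ₗ[ℂ] ℂ) (τ : M →ₗ[ℂ] ℂ)
    (hφ1 : ∀ N, φ N 1 = 1) (hφpos : ∀ N (a : A N), 0 ≤ φ N (star a * a))
    (hφfaith : ∀ N (a : A N), φ N (star a * a) = 0 → a = 0)
    (hφtr : ∀ N (a b : A N), φ N (a * b) = φ N (b * a))
    (hτ1 : τ 1 = 1) (hτpos : ∀ a : M, 0 ≤ τ (star a * a))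
    (hτfaith : ∀ a : M, τ (star a * a) = 0 → a = 0)
    (hτtr : ∀ a b : M, τ (a * b) = τ (b * a))
    (x : ∀ N, A N) (y : M) (r : ℕ)
    (hmom : ∀ m : ℕ, Tendsto (fun N => φ N ((star (x N) * x N) ^ m)) atTop
      (nhds (τ ((star y * y) ^ m))))
    (D : ℕ → ℝ) (hDbdd : ∃ B : ℝ, ∀ N, D N ≤ B) (hD1 : Tendsto D atTop (nhds 1))
    (hRD : ∀ N (m : ℕ), 0 < m →
      ‖x N‖ ^ (2 * m) ≤
        D N * ((2 * r * m + 1 : ℝ)) ^ ((3 : ℝ) / 2) *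
          ((φ N ((star (x N) * x N) ^ (2 * m))).re) ^ ((1 : ℝ) / 2)) :
    Tendsto (fun N => ‖x N‖) atTop (nhds ‖y‖) := by
  set t : ℕ → ℕ → ℝ := fun N m => (φ N ((star (x N) * x N) ^ m)).re with htdef
  set s : ℕ → ℝ := fun m => (τ ((star y * y) ^ m)).re with hsdef
  have hconv : ∀ m, Tendsto (fun N => t N m) atTop (nhds (s m)) := fun m =>
    (Complex.continuous_re.tendsto _).comp (hmom m)
  have hMprops := fun m => state_moment_props τ hτ1 hτpos hτfaith y m
  have hAprops := fun N m =>
    state_moment_props (φ N) (hφ1 N) (hφpos N) (hφfaith N) (x N) m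
  have hs0 : ∀ m, 0 ≤ s m := fun m => (hMprops m).1
  have hsup : ∀ m, s m ≤ ‖y‖ ^ (2 * m) := fun m => (hMprops m).2
  refine Metric.tendsto_nhds.mpr fun ε hε => ?_
  have hupper : ∀ᶠ N in atTop, ‖x N‖ < ‖y‖ + ε := by
    have hγ : 0 < ‖y‖ + ε := by positivity
    obtain ⟨m, hm1, hmlt⟩ : ∃ m : ℕ, 0 < m ∧
        ((2 * (r : ℝ) * m + 1)) ^ ((3:ℝ)/2) * (s (2*m)) ^ ((1:ℝ)/2) < (‖y‖ + ε) ^ (2*m) := by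
      rcases eq_or_lt_of_le (norm_nonneg y) with hy0 | hy0
      · refine ⟨1, one_pos, ?_⟩
        have h1 : s 2 ≤ 0 := by
          have h2 := hsup 2
          rw [← hy0] at h2
          simpa using h2
        have h2 : s (2*1) = 0 := le_antisymm (by simpa using h1) (hs0 _)
        rw [h2, Real.zero_rpow (by norm_num)]
        rw [mul_zero]
        rw [← hy0]
        positivity
      · set γ := ‖y‖ + ε with hγdef
        set σ := ‖y‖ / γ with hσdef
        have hσ0 : 0 ≤ σ := div_nonneg (norm_nonneg y) hγ.le
        have hσ1 : σ < 1 := (div_lt_one hγ).mpr (by linarith)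
        have hyσ : ‖y‖ = σ * γ := (div_mul_cancel₀ _ hγ.ne').symm
        have hC : (0:ℝ) < (2*(r:ℝ)+1)^2 := by positivity
        have hten := tendsto_pow_const_mul_const_pow_of_lt_one 2 (sq_nonneg σ)
          (pow_lt_one₀ hσ0 hσ1 two_ne_zero)
        obtain ⟨m, hmsmall, hm1⟩ :=
          ((hten.eventually_lt_const (by positivity : (0:ℝ) < 1/((2*(r:ℝ)+1)^2))).and
            (eventually_ge_atTop 1)).exists
        refine ⟨m, hm1, ?_⟩
        have hm1' : (1:ℝ) ≤ m := by exact_mod_cast hm1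
        have hbase1 : (1:ℝ) ≤ 2*(r:ℝ)*m+1 := by
          have : (0:ℝ) ≤ 2*(r:ℝ)*m := by positivity
          linarith
        have hK2 : ((2*(r:ℝ)*m+1)) ^ ((3:ℝ)/2) ≤ (2*(r:ℝ)*m+1)^(2:ℕ) := by
          calc ((2*(r:ℝ)*m+1)) ^ ((3:ℝ)/2) ≤ (2*(r:ℝ)*m+1) ^ (((2:ℕ):ℝ)) :=
              Real.rpow_le_rpow_of_exponent_le hbase1 (by norm_num)
          _ = (2*(r:ℝ)*m+1)^(2:ℕ) := Real.rpow_natCast _ 2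
        have hbase2 : 2*(r:ℝ)*m+1 ≤ (2*(r:ℝ)+1)*m := by
          have hr0 : (0:ℝ) ≤ (r:ℝ) := Nat.cast_nonneg r
          nlinarith
        have h3 : (2*(r:ℝ)*m+1)^(2:ℕ) ≤ ((2*(r:ℝ)+1)*m)^2 :=
          pow_le_pow_left₀ (by positivity) hbase2 2
        have step1 : (s (2*m)) ^ ((1:ℝ)/2) ≤ ‖y‖ ^ (2*m) := by
          have h4 : (s (2*m)) ^ ((1:ℝ)/2) ≤ (‖y‖ ^ (2*(2*m))) ^ ((1:ℝ)/2) :=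
            Real.rpow_le_rpow (hs0 _) (hsup (2*m)) (by norm_num)
          have h5 : (‖y‖ ^ (2*(2*m))) ^ ((1:ℝ)/2) = ‖y‖ ^ (2*m) := by
            rw [← Real.rpow_natCast ‖y‖ (2*(2*m)), ← Real.rpow_mul (norm_nonneg y),
              ← Real.rpow_natCast ‖y‖ (2*m)]
            congr 1
            push_cast
            ring
          rw [h5] at h4
          exact h4
        have hKnn : (0:ℝ) ≤ ((2*(r:ℝ)*m+1)) ^ ((3:ℝ)/2) := Real.rpow_nonneg (by positivity) _
        calc ((2*(r:ℝ)*m+1)) ^ ((3:ℝ)/2) * (s (2*m)) ^ ((1:ℝ)/2)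
            ≤ ((2*(r:ℝ)*m+1)) ^ ((3:ℝ)/2) * ‖y‖ ^ (2*m) :=
              mul_le_mul_of_nonneg_left step1 hKnn
        _ ≤ ((2*(r:ℝ)+1)*m)^2 * ‖y‖ ^ (2*m) :=
              mul_le_mul_of_nonneg_right (hK2.trans h3) (by positivity)
        _ = ((2*(r:ℝ)+1)^2 * ((m:ℝ)^2 * (σ^2)^m)) * γ ^ (2*m) := by
              rw [hyσ, mul_pow σ γ, pow_mul σ 2 m, mul_pow]
              ring
        _ < 1 * γ ^ (2*m) := by
              apply mul_lt_mul_of_pos_right _ (by positivity)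
              rw [lt_div_iff₀ hC] at hmsmall
              linarith [hmsmall]
        _ = (‖y‖ + ε) ^ (2*m) := by rw [one_mul]
    have hlim : Tendsto
        (fun N => D N * ((2 * (r:ℝ) * m + 1)) ^ ((3:ℝ)/2) * (t N (2*m)) ^ ((1:ℝ)/2))
        atTop (nhds (1 * ((2 * (r:ℝ) * m + 1)) ^ ((3:ℝ)/2) * (s (2*m)) ^ ((1:ℝ)/2))) := by
      apply Tendsto.mul
      · exact hD1.mul tendsto_const_nhds
      · exact ((Real.continuousAt_rpow_const (s (2*m)) ((1:ℝ)/2)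
          (Or.inr (by norm_num))).tendsto).comp (hconv (2*m))
    rw [one_mul] at hlim
    have hev := hlim.eventually_lt_const hmlt
    filter_upwards [hev] with N hN
    have h1 : ‖x N‖ ^ (2*m) < (‖y‖ + ε) ^ (2*m) := lt_of_le_of_lt (hRD N m hm1) hN
    exact lt_of_pow_lt_pow_left₀ (2*m) (by positivity) h1
  have hlower : ∀ᶠ N in atTop, ‖y‖ - ε < ‖x N‖ := by
    rcases le_or_gt ‖y‖ (ε/2) with hy | hy
    · refine Eventually.of_forall fun N => ?_
      have := norm_nonneg (x N)
      linarith
    · set β := ‖y‖ - ε/2 with hβdef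
      have hβpos : 0 < β := by simp only [hβdef]; linarith
      set θ := (‖y‖ - ε/4)^2 with hθdef
      have hy4 : 0 < ‖y‖ - ε/4 := by linarith
      have hθpos : 0 < θ := by positivity
      have hθlt : θ < ‖y‖^2 := by
        rw [hθdef]
        nlinarith
      obtain ⟨c, hc, hcm⟩ := state_moment_lower τ hτ1 hτpos hτfaith y hθpos.le hθlt
      have hβθ : β^2 / θ < 1 := by
        rw [div_lt_one hθpos, hθdef, hβdef]
        nlinarith
      obtain ⟨m, hm⟩ := exists_pow_lt_of_lt_one hc hβθ
      have hlt : β ^ (2*m) < c * θ^m := by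
        rw [div_pow] at hm
        rw [pow_mul]
        have h6 : (β^2)^m = ((β^2)^m / θ^m) * θ^m := by
          field_simp
        rw [h6]
        exact mul_lt_mul_of_pos_right hm (by positivity)
      have hev := (hconv m).eventually_const_lt (lt_of_lt_of_le hlt (hcm m))
      filter_upwards [hev] with N hN
      have hup : t N m ≤ ‖x N‖ ^ (2*m) := (hAprops N m).2
      have hβx : β < ‖x N‖ :=
        lt_of_pow_lt_pow_left₀ (2*m) (norm_nonneg _) (lt_of_lt_of_le hN hup)
      simp only [hβdef] at hβx
      linarith
  filter_upwards [hupper, hlower] with N h1 h2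
  rw [Real.dist_eq, abs_sub_lt_iff]
  constructor <;> linarith
end

section
/- Let H be a Hilbert space decomposed as an orthogonal direct sum H = ⊕_{k∈ℕ} H_k with orthogonal projections P_k. Let x be a bounded operator on H and n ∈ ℕ, D > 0 be such that: (a) P_l x P_k = 0 unless |n - k| ≤ l ≤ n + k; (b) ‖P_l x P_k ξ‖ ≤ D·C·‖P_k ξ‖ for all ξ ∈ H, l, k, where C > 0 is a fixed constant. Then ‖x‖ ≤ D·C·(n+1). -/
/-!
The pairs `(l, k)` allowed by the support condition are exactly the pairs `(a + m, b + m)` with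
`a + b = n`, so `x` is the sum of `n + 1` "diagonals" `∑ₘ P_{a+m} x P_{b+m}`. On one diagonal the
summands have mutually orthogonal ranges and are fed by the mutually orthogonal pieces
`P_{b+m} ξ`, so Pythagoras bounds its norm by `D C`; the triangle inequality over the `n + 1`
diagonals gives `‖x‖ ≤ D C (n + 1)`.
-/

open ContinuousLinearMap Finset

def InBand (n l k : ℕ) : Prop :=
  (n : ℤ) - k ≤ l ∧ (k : ℤ) - n ≤ l ∧ (l : ℤ) ≤ n + k ∧ Even (l + n + k)

theorem InBand.le_add {n l k : ℕ} (h : InBand n l k) : l ≤ n + k := by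
  unfold InBand at h
  omega

theorem InBand.exists_mem_antidiagonal {n l k : ℕ} (h : InBand n l k) :
    ∃ p ∈ antidiagonal n, k + p.1 - p.2 = l := by
  obtain ⟨h₁, h₂, h₃, r, hr⟩ := h
  exact ⟨(n + l - r, r - l), by rw [HasAntidiagonal.mem_antidiagonal]; omega, by dsimp only; omega⟩

theorem inBand_iff_of_mem_antidiagonal {n k : ℕ} {p : ℕ × ℕ} (hp : p ∈ antidiagonal n) :
    InBand n (k + p.1 - p.2) k ↔ p.2 ≤ k := by
  rw [HasAntidiagonal.mem_antidiagonal] at hp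
  constructor
  · rintro ⟨h₁, -⟩
    omega
  · intro hk
    exact ⟨by omega, by omega, by omega, ⟨k + p.1, by omega⟩⟩

theorem sum_antidiagonal_eq_of_hasSum {M : Type*} [AddCommMonoid M] [TopologicalSpace M]
    [T2Space M] {n k : ℕ} {F : ℕ → M} {v : M} (hF : HasSum F v)
    (hband : ∀ l, ¬InBand n l k → F l = 0) :
    ∑ p ∈ antidiagonal n, F (k + p.1 - p.2) = v := by
  have hsupp (l : ℕ) (hl : F l ≠ 0) : InBand n l k := not_imp_comm.1 (hband l) hl
  rw [hF.unique (hasSum_sum_of_ne_finset_zero (s := range (n + k + 1)) fun l hl =>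
    hband l fun h => hl (mem_range.2 (Nat.lt_succ_of_le h.le_add)))]
  refine sum_bij_ne_zero (fun p _ _ => k + p.1 - p.2) (fun p _ h => ?_)
    (fun p hp hp' q hq hq' hpq => ?_) (fun l _ hl => ?_) fun _ _ _ => rfl
  · exact mem_range.2 (Nat.lt_succ_of_le (hsupp _ h).le_add)
  · have hpk := (inBand_iff_of_mem_antidiagonal hp).1 (hsupp _ hp')
    have hqk := (inBand_iff_of_mem_antidiagonal hq).1 (hsupp _ hq')
    rw [HasAntidiagonal.mem_antidiagonal] at hp hq
    exact Prod.ext (by omega) (by omega)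
  · obtain ⟨p, hp, rfl⟩ := (hsupp l hl).exists_mem_antidiagonal
    exact ⟨p, hp, hl, rfl⟩

section InnerProductSpace

variable {𝕜 E ι : Type*} [RCLike 𝕜] [NormedAddCommGroup E] [InnerProductSpace 𝕜 E]

theorem orthogonalFamily_span_singleton {g : ι → E}
    (hg : Pairwise fun i j => inner 𝕜 (g i) (g j) = 0) :
    OrthogonalFamily 𝕜 (fun i => Submodule.span 𝕜 {g i})
      fun i => (Submodule.span 𝕜 {g i}).subtypeₗᵢ :=
  orthogonalFamily_iff_pairwise.2 fun i j hij => by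
    simpa only [Function.onFun, Submodule.isOrtho_span, Set.mem_singleton_iff, forall_eq] using
      hg hij

theorem apply_eq_sum_antidiagonal_tsum {P : ℕ → E →L[𝕜] E}
    (hsum : ∀ ξ, HasSum (fun k => P k ξ) ξ) {x : E →L[𝕜] E} {n : ℕ}
    (hvanish : ∀ l k, ¬InBand n l k → (P l).comp (x.comp (P k)) = 0) {ξ : E}
    (hdiag : ∀ p ∈ antidiagonal n, Summable fun m => P (p.1 + m) (x (P (p.2 + m) ξ))) :
    x ξ = ∑ p ∈ antidiagonal n, ∑' m, P (p.1 + m) (x (P (p.2 + m) ξ)) := by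
  have hvanish' (l k : ℕ) (h : ¬InBand n l k) : P l (x (P k ξ)) = 0 :=
    congr($(hvanish l k h) ξ)
  have hcolumn (k : ℕ) : ∑ p ∈ antidiagonal n, P (k + p.1 - p.2) (x (P k ξ)) = x (P k ξ) :=
    sum_antidiagonal_eq_of_hasSum (hsum _) (hvanish' · k)
  have hdiagonal (p : ℕ × ℕ) (hp : p ∈ antidiagonal n) :
      HasSum (fun k => P (k + p.1 - p.2) (x (P k ξ)))
        (∑' m, P (p.1 + m) (x (P (p.2 + m) ξ))) := by
    rw [← (add_right_injective p.2).hasSum_iff]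
    · convert (hdiag p hp).hasSum using 2 with m
      simp only [Function.comp_apply]
      congr 2
      omega
    · intro k hk
      refine hvanish' _ _ fun h => hk ⟨k - p.2, ?_⟩
      have := (inBand_iff_of_mem_antidiagonal hp).1 h
      dsimp only
      omega
  refine ((hsum ξ).mapL x).unique ?_
  simpa only [hcolumn] using hasSum_sum hdiagonal

variable [CompleteSpace E]

theorem summable_and_norm_tsum_sq_of_pairwise_inner_eq_zero {g : ι → E}
    (hg : Pairwise fun i j => inner 𝕜 (g i) (g j) = 0) (h : Summable fun i => ‖g i‖ ^ 2) :
    Summable g ∧ ‖∑' i, g i‖ ^ 2 = ∑' i, ‖g i‖ ^ 2 := by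
  set V := orthogonalFamily_span_singleton hg
  let l : ∀ i, Submodule.span 𝕜 {g i} := fun i => ⟨g i, Submodule.mem_span_singleton_self _⟩
  have hsummable : Summable g := (V.summable_iff_norm_sq_summable l).2 h
  refine ⟨hsummable, tendsto_nhds_unique ?_ h.hasSum⟩
  have hpythagoras (s : Finset ι) : ‖∑ i ∈ s, g i‖ ^ 2 = ∑ i ∈ s, ‖g i‖ ^ 2 := V.norm_sum l s
  simpa only [hpythagoras] using hsummable.hasSum.norm.pow 2

theorem inner_map_map_eq_zero_of_adjoint_comp_eq_zero {S T : E →L[𝕜] E}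
    (h : adjoint S ∘L T = 0) (u v : E) : inner 𝕜 (S u) (T v) = 0 := by
  rw [← adjoint_inner_right, ← comp_apply, h, zero_apply, inner_zero_right]

theorem hasSum_norm_sq_of_isStarProjection {P : ι → E →L[𝕜] E}
    (hP : ∀ k, IsStarProjection (P k)) (hsum : ∀ ζ, HasSum (fun k => P k ζ) ζ) (ζ : E) :
    HasSum (fun k => ‖P k ζ‖ ^ 2) (‖ζ‖ ^ 2) := by
  have hre := ((hsum ζ).mapL (innerSL 𝕜 ζ)).mapL RCLike.reCLM
  have hterm (k : ι) : RCLike.re (inner 𝕜 ζ (P k ζ)) = ‖P k ζ‖ ^ 2 := by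
    have hidem : P k (P k ζ) = P k ζ := congr($((hP k).isIdempotentElem.eq) ζ)
    conv_lhs => rw [← hidem, ← adjoint_inner_left, (hP k).isSelfAdjoint.adjoint_eq]
    exact inner_self_eq_norm_sq _
  simpa only [RCLike.reCLM_apply, innerSL_apply_apply, hterm, inner_self_eq_norm_sq] using hre

theorem summable_and_norm_tsum_block_diagonal_le {P : ι → E →L[𝕜] E}
    (hortho : Pairwise fun k l => ∀ u v, inner 𝕜 (P k u) (P l v) = 0)
    (hparseval : ∀ ζ, HasSum (fun k => ‖P k ζ‖ ^ 2) (‖ζ‖ ^ 2))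
    {x : E →L[𝕜] E} {c : ℝ} (hc : 0 ≤ c) (hbound : ∀ l k ξ, ‖P l (x (P k ξ))‖ ≤ c * ‖P k ξ‖)
    {κ : Type*} {f g : κ → ι} (hf : f.Injective) (hg : g.Injective) (ξ : E) :
    Summable (fun m => P (f m) (x (P (g m) ξ))) ∧
      ‖∑' m, P (f m) (x (P (g m) ξ))‖ ≤ c * ‖ξ‖ := by
  have hsq (m : κ) : ‖P (f m) (x (P (g m) ξ))‖ ^ 2 ≤ c ^ 2 * ‖P (g m) ξ‖ ^ 2 := by
    rw [← mul_pow]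
    exact pow_le_pow_left₀ (norm_nonneg _) (hbound _ _ _) 2
  have hbessel : Summable fun m => ‖P (g m) ξ‖ ^ 2 := (hparseval ξ).summable.comp_injective hg
  have hsummable_sq : Summable fun m => ‖P (f m) (x (P (g m) ξ))‖ ^ 2 :=
    (hbessel.mul_left (c ^ 2)).of_nonneg_of_le (fun _ => by positivity) hsq
  obtain ⟨hsummable, hnorm⟩ := summable_and_norm_tsum_sq_of_pairwise_inner_eq_zero
    (fun m m' hmm' => hortho (hf.ne hmm') _ _) hsummable_sq
  refine ⟨hsummable, le_of_pow_le_pow_left₀ two_ne_zero (by positivity) ?_⟩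
  calc ‖∑' m, P (f m) (x (P (g m) ξ))‖ ^ 2 = ∑' m, ‖P (f m) (x (P (g m) ξ))‖ ^ 2 := hnorm
    _ ≤ ∑' m, c ^ 2 * ‖P (g m) ξ‖ ^ 2 := hsummable_sq.tsum_le_tsum hsq (hbessel.mul_left _)
    _ = c ^ 2 * ∑' m, ‖P (g m) ξ‖ ^ 2 := tsum_mul_left
    _ ≤ c ^ 2 * ‖ξ‖ ^ 2 := by
      gcongr
      exact (hparseval ξ).tsum_eq ▸ tsum_comp_le_tsum_of_inj (hparseval ξ).summable
        (fun _ => by positivity) hg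
    _ = (c * ‖ξ‖) ^ 2 := (mul_pow _ _ _).symm

end InnerProductSpace

/-- The abstract Cauchy–Schwarz argument underlying property (RD).  If
`H = ⊕_k H_k` with orthogonal projections `P_k`, and `x` satisfies
`P_l x P_k = 0` unless `|n-k| ≤ l ≤ n+k` and `l+n+k` is even, together with the
uniform bound `‖P_l x P_k ξ‖ ≤ D·C·‖P_k ξ‖`, then `‖x‖ ≤ D·C·(n+1)`. -/
theorem rapid_decay_abstract
    {H : Type*} [NormedAddCommGroup H] [InnerProductSpace ℂ H] [CompleteSpace H]
    (P : ℕ → H →L[ℂ] H)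
    (hidem : ∀ k, (P k).comp (P k) = P k)
    (hadj : ∀ k, ContinuousLinearMap.adjoint (P k) = P k)
    (horth : ∀ k l, k ≠ l → (P k).comp (P l) = 0)
    (hsum : ∀ ξ : H, HasSum (fun k => P k ξ) ξ)
    (x : H →L[ℂ] H) (n : ℕ) (D C : ℝ) (hD : 0 < D) (hC : 0 < C)
    (hvanish : ∀ l k : ℕ,
      ¬(((n : ℤ) - k ≤ l) ∧ ((k : ℤ) - n ≤ l) ∧ ((l : ℤ) ≤ n + k) ∧ Even (l + n + k)) →
        ((P l).comp (x.comp (P k))) = 0)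
    (hbound : ∀ (l k : ℕ) (ξ : H), ‖P l (x (P k ξ))‖ ≤ D * C * ‖P k ξ‖) :
    ‖x‖ ≤ D * C * (n + 1) := by
  have hortho : Pairwise fun k l => ∀ u v : H, inner ℂ (P k u) (P l v) = 0 := fun k l hkl =>
    inner_map_map_eq_zero_of_adjoint_comp_eq_zero (by rw [hadj, horth k l hkl])
  have hparseval := hasSum_norm_sq_of_isStarProjection (fun k => ⟨hidem k, hadj k⟩) hsum
  have hDC : 0 ≤ D * C := by positivity
  refine x.opNorm_le_bound (by positivity) fun ξ => ?_
  have hdiag (p : ℕ × ℕ) := summable_and_norm_tsum_block_diagonal_le hortho hparseval hDC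
    hbound (add_right_injective p.1) (add_right_injective p.2) ξ
  rw [apply_eq_sum_antidiagonal_tsum hsum hvanish fun p _ => (hdiag p).1]
  calc _ ≤ ∑ _p ∈ antidiagonal n, D * C * ‖ξ‖ := norm_sum_le_of_le _ fun p _ => (hdiag p).2
    _ = D * C * (n + 1) * ‖ξ‖ := by
      rw [sum_const, Nat.card_antidiagonal, nsmul_eq_mul]
      push_cast
      ring
end
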